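/- Ready simulation equivalence is strictly finer than conformance simulation equivalence: for all closed BCCSP processes p, q, if p ≲_RS q and q ≲_RS p then p ≡_CS q; moreover, for pairwise distinct actions a, b, c ∈ A, the processes a.b.0 and a.b.0 + a.(b.0 + c.0) satisfy a.b.0 ≡_CS a.b.0 + a.(b.0 + c.0) but not a.(b.0 + c.0) ≲_S a.b.0 (hence in particular not a.(b.0 + c.0) ≲_RS a.b.0). -/

import Mathlib

inductive Proc (A : Type) : Type
  | nil : Proc A
  | pre : A → Proc A → Proc A
  | add : Proc A → Proc A → Proc A

inductive Step {A : Type} : Proc A → A → Proc A → Prop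
  | pre (a : A) (p : Proc A) : Step (.pre a p) a p
  | addL {p : Proc A} {a : A} {p' : Proc A} (q : Proc A) :
      Step p a p' → Step (.add p q) a p'
  | addR {q : Proc A} {a : A} {q' : Proc A} (p : Proc A) :
      Step q a q' → Step (.add p q) a q'

/-- `initials p` is the set `I(p)` of actions that `p` can immediately perform. -/
def initials {A : Type} (p : Proc A) : Set A := {a | ∃ p', Step p a p'}

/-- `{Ar, Al, Abi}` is a partition of the action set `A` (cells may be empty). -/
def IsPartition {A : Type} (Ar Al Abi : Set A) : Prop :=
  (Ar ∪ Al ∪ Abi = Set.univ) ∧ Disjoint Ar Al ∧ Disjoint Ar Abi ∧ Disjoint Al Abi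

/-- Covariant-contravariant simulation w.r.t. covariant actions `Ar`,
contravariant actions `Al` and bivariant actions `Abi`. -/
def IsCCSim {A : Type} (Ar Al Abi : Set A) (S : Proc A → Proc A → Prop) : Prop :=
  ∀ p q, S p q →
    (∀ a ∈ Ar ∪ Abi, ∀ p', Step p a p' → ∃ q', Step q a q' ∧ S p' q') ∧
    (∀ a ∈ Al ∪ Abi, ∀ q', Step q a q' → ∃ p', Step p a p' ∧ S p' q')

/-- The covariant-contravariant simulation preorder `p ≲_CC q`. -/
def ccLe {A : Type} (Ar Al Abi : Set A) (p q : Proc A) : Prop :=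
  ∃ S, IsCCSim Ar Al Abi S ∧ S p q

/-- Covariant-contravariant simulation equivalence `p ≡_CC q`. -/
def ccEq {A : Type} (Ar Al Abi : Set A) (p q : Proc A) : Prop :=
  ccLe Ar Al Abi p q ∧ ccLe Ar Al Abi q p

/-- Conformance simulation. -/
def IsConfSim {A : Type} (R : Proc A → Proc A → Prop) : Prop :=
  ∀ p q, R p q →
    initials p ⊆ initials q ∧
    (∀ a q', Step q a q' → a ∈ initials p → ∃ p', Step p a p' ∧ R p' q')

/-- The conformance simulation preorder `p ≲_CS q`. -/
def csLe {A : Type} (p q : Proc A) : Prop := ∃ R, IsConfSim R ∧ R p q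

/-- Conformance simulation equivalence `p ≡_CS q`. -/
def csEq {A : Type} (p q : Proc A) : Prop := csLe p q ∧ csLe q p

/-- The conformance precongruence `p ⊑_CS q`. -/
def csPre {A : Type} (p q : Proc A) : Prop := csLe p q ∧ initials q ⊆ initials p

/-- Plain simulation. -/
def IsSim {A : Type} (S : Proc A → Proc A → Prop) : Prop :=
  ∀ p q, S p q → ∀ a p', Step p a p' → ∃ q', Step q a q' ∧ S p' q'

/-- The plain simulation preorder `p ≲_S q`. -/
def simLe {A : Type} (p q : Proc A) : Prop := ∃ S, IsSim S ∧ S p q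

/-- Ready simulation. -/
def IsRSim {A : Type} (S : Proc A → Proc A → Prop) : Prop :=
  ∀ p q, S p q → initials p = initials q ∧
    (∀ a p', Step p a p' → ∃ q', Step q a q' ∧ S p' q')

/-- The ready simulation preorder `p ≲_RS q`. -/
def rsLe {A : Type} (p q : Proc A) : Prop := ∃ S, IsRSim S ∧ S p q

/-- Ready conformance simulation: a conformance simulation that additionally
guarantees `I(q) ⊆ I(p)` for all related pairs. -/
def IsRCSim {A : Type} (R : Proc A → Proc A → Prop) : Prop :=
  IsConfSim R ∧ ∀ p q, R p q → initials q ⊆ initials p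

/-- The ready conformance simulation preorder `p ≲_RCS q`. -/
def rcsLe {A : Type} (p q : Proc A) : Prop := ∃ R, IsRCSim R ∧ R p q

/-- Open BCCSP terms (with variables indexed by `ℕ`). -/
inductive Term (A : Type) : Type
  | var : ℕ → Term A
  | nil : Term A
  | pre : A → Term A → Term A
  | add : Term A → Term A → Term A

/-- Closed substitution applied to an open term. -/
def Term.subst {A : Type} (σ : ℕ → Proc A) : Term A → Proc A
  | .var n => σ n
  | .nil => .nil
  | .pre a t => .pre a (t.subst σ)
  | .add s t => .add (s.subst σ) (t.subst σ)

/-- View a closed process as an (open) term. -/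
def Proc.toTerm {A : Type} : Proc A → Term A
  | .nil => .nil
  | .pre a p => .pre a p.toTerm
  | .add p q => .add p.toTerm q.toTerm

/-- Inequational derivability (between closed processes) from a set `E` of
inequations between open terms: the least relation containing all substitution
instances of `E` and closed under reflexivity, transitivity and the congruence
rules for prefixing and `+`. -/
inductive DerivLe {A : Type} (E : Set (Term A × Term A)) : Proc A → Proc A → Prop
  | ax (l r : Term A) (σ : ℕ → Proc A) : (l, r) ∈ E → DerivLe E (l.subst σ) (r.subst σ)
  | refl (p : Proc A) : DerivLe E p p
  | trans {p q r : Proc A} : DerivLe E p q → DerivLe E q r → DerivLe E p r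
  | pre (a : A) {p q : Proc A} : DerivLe E p q → DerivLe E (.pre a p) (.pre a q)
  | add {p q r s : Proc A} : DerivLe E p q → DerivLe E r s → DerivLe E (.add p r) (.add q s)

/-- Equational derivability (between closed processes) from a set `E` of
equations between open terms. -/
inductive DerivEq {A : Type} (E : Set (Term A × Term A)) : Proc A → Proc A → Prop
  | ax (l r : Term A) (σ : ℕ → Proc A) : (l, r) ∈ E → DerivEq E (l.subst σ) (r.subst σ)
  | refl (p : Proc A) : DerivEq E p p
  | symm {p q : Proc A} : DerivEq E p q → DerivEq E q p
  | trans {p q r : Proc A} : DerivEq E p q → DerivEq E q r → DerivEq E p r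
  | pre (a : A) {p q : Proc A} : DerivEq E p q → DerivEq E (.pre a p) (.pre a q)
  | add {p q r s : Proc A} : DerivEq E p q → DerivEq E r s → DerivEq E (.add p r) (.add q s)

/-- Substitution of (possibly open) terms for variables. -/
def Term.substT {A : Type} (σ : ℕ → Term A) : Term A → Term A
  | .var n => σ n
  | .nil => .nil
  | .pre a t => .pre a (t.substT σ)
  | .add s t => .add (s.substT σ) (t.substT σ)

/-- Equational derivability between open terms from a set `E` of equations. -/
inductive TDerivEq {A : Type} (E : Set (Term A × Term A)) : Term A → Term A → Prop
  | ax (l r : Term A) (σ : ℕ → Term A) : (l, r) ∈ E → TDerivEq E (l.substT σ) (r.substT σ)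
  | refl (t : Term A) : TDerivEq E t t
  | symm {s t : Term A} : TDerivEq E s t → TDerivEq E t s
  | trans {s t u : Term A} : TDerivEq E s t → TDerivEq E t u → TDerivEq E s u
  | pre (a : A) {s t : Term A} : TDerivEq E s t → TDerivEq E (.pre a s) (.pre a t)
  | add {s t u v : Term A} : TDerivEq E s t → TDerivEq E u v → TDerivEq E (.add s u) (.add t v)

/-- The bisimulation axioms B1–B4, as equations. -/
def BEqns (A : Type) : Set (Term A × Term A) :=
  { (.add (.var 0) (.var 1), .add (.var 1) (.var 0)),
    (.add (.add (.var 0) (.var 1)) (.var 2), .add (.var 0) (.add (.var 1) (.var 2))),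
    (.add (.var 0) (.var 0), .var 0),
    (.add (.var 0) .nil, .var 0) }

/-- The bisimulation axioms B1–B4, each used as two inequations. -/
def BIneqs (A : Type) : Set (Term A × Term A) := BEqns A ∪ Prod.swap '' BEqns A

/-
A ready simulation read backwards is a conformance simulation: its clause `I(p) = I(q)` gives
the inclusion of initials, and its step clause becomes the (even unconditional) answering clause.
For the separating example, `a.b.0 + a.(b.0 + c.0)` conformance-simulates `a.b.0` because the
extra branch `c` of `b.0 + c.0` is never offered by `b.0` and hence need not be matched; a plain
simulation, in contrast, must match the `c`-step of `b.0 + c.0` inside `b.0`, which is impossible.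
-/

namespace Proc

variable {A : Type}

@[simp]
theorem step_pre_iff {a b : A} {p p' : Proc A} : Step (.pre a p) b p' ↔ b = a ∧ p' = p := by
  constructor
  · rintro ⟨⟩
    exact ⟨rfl, rfl⟩
  · rintro ⟨rfl, rfl⟩
    exact .pre _ _

@[simp]
theorem step_add_iff {a : A} {p q r : Proc A} : Step (.add p q) a r ↔ Step p a r ∨ Step q a r := by
  constructor
  · rintro (_ | ⟨_, h⟩ | ⟨_, h⟩)
    exacts [.inl h, .inr h]
  · rintro (h | h)
    exacts [.addL q h, .addR p h]

@[simp]
theorem initials_pre (a : A) (p : Proc A) : initials (.pre a p) = {a} := by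
  ext; simp [initials]

@[simp]
theorem initials_add (p q : Proc A) : initials (.add p q) = initials p ∪ initials q := by
  ext; simp [initials, exists_or]

end Proc

open Proc

section Conformance

variable {A : Type}

theorem isConfSim_csLe : IsConfSim (csLe (A := A)) := by
  rintro p q ⟨R, hR, hpq⟩
  refine ⟨(hR p q hpq).1, fun a q' hq ha => ?_⟩
  obtain ⟨p', hp, hpq'⟩ := (hR p q hpq).2 a q' hq ha
  exact ⟨p', hp, R, hR, hpq'⟩

theorem csLe_refl (p : Proc A) : csLe p p :=
  ⟨Eq, fun _ _ h => h ▸ ⟨subset_rfl, fun _ q' hq _ => ⟨q', hq, rfl⟩⟩, rfl⟩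

/-- Coinduction for `≲_CS`: it suffices to check the clauses once, against `≲_CS` itself. -/
theorem csLe_of_step {p q : Proc A} (hinit : initials p ⊆ initials q)
    (hstep : ∀ a q', Step q a q' → a ∈ initials p → ∃ p', Step p a p' ∧ csLe p' q') :
    csLe p q := by
  refine ⟨fun x y => (x = p ∧ y = q) ∨ csLe x y, ?_, .inl ⟨rfl, rfl⟩⟩
  rintro x y (⟨rfl, rfl⟩ | hxy)
  · exact ⟨hinit, fun a q' hq ha => (hstep a q' hq ha).imp fun _ => And.imp_right .inr⟩
  · exact (isConfSim_csLe x y hxy).imp_right fun h a q' hq ha =>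
      (h a q' hq ha).imp fun _ => And.imp_right .inr

theorem csLe_add_of_disjoint {p q : Proc A} (h : Disjoint (initials p) (initials q)) :
    csLe p (.add p q) := by
  refine csLe_of_step (by simp) fun a r hr ha => ?_
  rcases step_add_iff.1 hr with hp | hq
  · exact ⟨r, hp, csLe_refl r⟩
  · exact absurd ⟨r, hq⟩ (Set.disjoint_left.1 h ha)

theorem csLe_pre_add_pre (a : A) {p q : Proc A} (h : csLe p q) :
    csLe (.pre a p) (.add (.pre a p) (.pre a q)) := by
  refine csLe_of_step (by simp) fun b r hr _ => ?_
  obtain ⟨rfl, rfl⟩ | ⟨rfl, rfl⟩ := by simpa using hr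
  exacts [⟨_, .pre _ _, csLe_refl _⟩, ⟨_, .pre _ _, h⟩]

theorem add_pre_csLe_pre (a : A) (p q : Proc A) :
    csLe (.add (.pre a p) (.pre a q)) (.pre a p) := by
  refine csLe_of_step (by simp) fun b r hr _ => ?_
  obtain ⟨rfl, rfl⟩ := step_pre_iff.1 hr
  exact ⟨r, .addL _ (.pre b r), csLe_refl r⟩

end Conformance

section Simulation

variable {A : Type} {p q p' : Proc A} {a : A}

theorem simLe.exists_step (h : simLe p q) (hp : Step p a p') :
    ∃ q', Step q a q' ∧ simLe p' q' := by
  obtain ⟨S, hS, hpq⟩ := h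
  obtain ⟨q', hq, hpq'⟩ := hS p q hpq a p' hp
  exact ⟨q', hq, S, hS, hpq'⟩

theorem simLe.initials_subset (h : simLe p q) : initials p ⊆ initials q := fun _ ⟨_, hp⟩ =>
  (h.exists_step hp).imp fun _ => And.left

theorem simLe.of_pre_pre {q : Proc A} (h : simLe (.pre a p) (.pre a q)) : simLe p q := by
  obtain ⟨q', hq, hpq⟩ := h.exists_step (.pre a p)
  obtain ⟨-, rfl⟩ := step_pre_iff.1 hq
  exact hpq

theorem IsRSim.isSim {S : Proc A → Proc A → Prop} (hS : IsRSim S) : IsSim S :=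
  fun p q h => (hS p q h).2

theorem rsLe.simLe (h : rsLe p q) : simLe p q :=
  h.imp fun _ => And.imp_left IsRSim.isSim

theorem IsRSim.isConfSim_flip {S : Proc A → Proc A → Prop} (hS : IsRSim S) :
    IsConfSim (flip S) := fun p q h =>
  ⟨(hS q p h).1.ge, fun a q' hq _ => (hS q p h).2 a q' hq⟩

theorem rsLe.csLe_flip (h : rsLe p q) : csLe q p :=
  let ⟨S, hS, hpq⟩ := h
  ⟨flip S, hS.isConfSim_flip, hpq⟩

end Simulation

theorem rs_strictly_finer_than_cs_general {A : Type} (a b c : A)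
    (hbc : b ≠ c) :
    (∀ p q : Proc A, rsLe p q → rsLe q p → csEq p q) ∧
    csEq (Proc.pre a (.pre b .nil))
      (.add (.pre a (.pre b .nil)) (.pre a (.add (.pre b .nil) (.pre c .nil)))) ∧
    ¬ simLe (Proc.pre a (.add (.pre b .nil) (.pre c .nil))) (.pre a (.pre b .nil)) ∧
    ¬ rsLe (Proc.pre a (.add (.pre b .nil) (.pre c .nil))) (.pre a (.pre b .nil)) := by
  have hdisj : Disjoint (initials (.pre b .nil : Proc A)) (initials (.pre c .nil)) := by
    simpa using hbc
  have not_sim : ¬ simLe (Proc.pre a (.add (.pre b .nil) (.pre c .nil))) (.pre a (.pre b .nil)) :=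
    fun h => by simpa [hbc.symm] using h.of_pre_pre.initials_subset
  refine ⟨fun p q hpq hqp => ⟨hqp.csLe_flip, hpq.csLe_flip⟩,
    ⟨csLe_pre_add_pre a (csLe_add_of_disjoint hdisj), add_pre_csLe_pre a _ _⟩,
    not_sim, fun h => not_sim h.simLe⟩

/-- Ready simulation equivalence is strictly finer than conformance simulation
equivalence: `≡_RS ⊆ ≡_CS`, and for distinct actions `a, b, c` we have
`a.b.0 ≡_CS a.b.0 + a.(b.0 + c.0)` while `a.(b.0 + c.0)` is not (plainly, nor
readily) simulated by `a.b.0`. -/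
theorem rs_strictly_finer_than_cs {A : Type} (a b c : A)
    (hab : a ≠ b) (hac : a ≠ c) (hbc : b ≠ c) :
    (∀ p q : Proc A, rsLe p q → rsLe q p → csEq p q) ∧
    csEq (Proc.pre a (.pre b .nil))
      (.add (.pre a (.pre b .nil)) (.pre a (.add (.pre b .nil) (.pre c .nil)))) ∧
    ¬ simLe (Proc.pre a (.add (.pre b .nil) (.pre c .nil))) (.pre a (.pre b .nil)) ∧
    ¬ rsLe (Proc.pre a (.add (.pre b .nil) (.pre c .nil))) (.pre a (.pre b .nil)) :=
  rs_strictly_finer_than_cs_general a b c hbc
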